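/- Let η₁, η₂ be weights on ℝ^n (nonnegative locally integrable, positive a.e.) such that the ratio η₁/η₂ is not essentially bounded. Then there exists a locally integrable function b with sup_Q (1/η₁(Q)) ∫_Q |b − b_Q| dx < ∞ but sup_Q (1/η₂(Q)) ∫_Q |b − b_Q| dx = ∞, where η(Q) = ∫_Q η and b_Q = (1/|Q|)∫_Q b. -/

import Mathlib

/-!
Pick points `x k` that are Lebesgue points of both weights (along cubes) with
`η₁ (x k) / η₂ (x k) > k`, and cubes `Q k` with corner `x k` whose side lengths shrink so fast that
the later cubes `Q j`, `j > k`, fill at most `|Q k| / 8`. Let `L k` be the lower half of `Q k` and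
`b = η₁ · 1_A` with `A = ⋃ k, L k \ ⋃ j > k, Q j`. Since `|b| ≤ η₁`, the `η₁`-weighted mean
oscillation of `b` is at most `2` on every cube. On `Q k`, however, `b` is close in `L¹` to
`η₁ (x k) · 1_{L k}`, whose mean oscillation is `≳ η₁ (x k) |Q k|`, while `η₂(Q k) ≲ η₂ (x k) |Q k|`;
so the `η₂`-weighted mean oscillation on `Q k` exceeds `k / 5`.
-/

open MeasureTheory

def cube (n : ℕ) (a : Fin n → ℝ) (h : ℝ) : Set (Fin n → ℝ) :=
  {x | ∀ i, a i ≤ x i ∧ x i ≤ a i + h}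

/-- Normalized average `(1/|Q|) ∫_Q f`. -/
noncomputable def avgI (n : ℕ) (Q : Set (Fin n → ℝ)) (f : (Fin n → ℝ) → ℝ) : ℝ :=
  (volume Q).toReal⁻¹ * ∫ x in Q, f x

open Set Filter Topology

section Generic

variable {α : Type*}

lemma abs_indicator_sub_indicator_const_le (A L : Set α) (f : α → ℝ) (c : ℝ) (y : α) :
    |A.indicator f y - L.indicator (fun _ => c) y| ≤
      |f y - c| + (symmDiff A L).indicator (fun _ => |c|) y := by
  by_cases hA : y ∈ A <;> by_cases hL : y ∈ L <;>
    simp [hA, hL, mem_symmDiff, abs_sub_comm (f y)]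
  linarith [abs_sub_abs_le_abs_sub (f y) c, abs_sub_comm c (f y)]

lemma inter_symmDiff_iUnion_sdiff_subset {Q L : ℕ → Set α} (hLQ : ∀ k, L k ⊆ Q k)
    (k : ℕ) : Q k ∩ symmDiff (⋃ i, L i \ ⋃ j > i, Q j) (L k) ⊆ ⋃ j > k, Q j := by
  rintro y ⟨hyQ, hyD⟩
  by_contra hyT
  have hiff : y ∈ ⋃ i, L i \ ⋃ j > i, Q j ↔ y ∈ L k := by
    refine ⟨fun hyA => ?_, fun hyL => mem_iUnion.2 ⟨k, hyL, hyT⟩⟩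
    obtain ⟨i, hyL, hyT'⟩ := mem_iUnion.1 hyA
    rcases lt_trichotomy i k with hik | rfl | hki
    · exact absurd (mem_biUnion hik hyQ) hyT'
    · exact hyL
    · exact absurd (mem_biUnion hki (hLQ i hyL)) hyT
  rw [mem_symmDiff] at hyD
  tauto

lemma exists_pos_le_of_succ_le_mul (δ : ℕ → ℝ) (hδ : ∀ k, 0 < δ k) {r : ℝ} (hr : 0 < r) :
    ∃ h : ℕ → ℝ, ∀ k, 0 < h k ∧ h k ≤ δ k ∧ h (k + 1) ≤ r * h k := by
  let h : ℕ → ℝ := fun k => Nat.rec (δ 0) (fun k hk => min (δ (k + 1)) (r * hk)) k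
  have hpos : ∀ k, 0 < h k := fun k => by
    induction k with
    | zero => exact hδ 0
    | succ k ih => exact lt_min (hδ _) (mul_pos hr ih)
  refine ⟨h, fun k => ⟨hpos k, ?_, min_le_right _ _⟩⟩
  cases k with
  | zero => exact le_rfl
  | succ k => exact min_le_left _ _

variable [MeasurableSpace α] {μ : Measure α}

lemma abs_setIntegral_sub_mul_le {s : Set α} (hs : μ s ≠ ⊤) {f : α → ℝ}
    (hf : IntegrableOn f s μ) (c : ℝ) :
    |∫ x in s, f x ∂μ - c * μ.real s| ≤ ∫ x in s, |f x - c| ∂μ := by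
  have hc : IntegrableOn (fun _ => c) s μ := integrableOn_const hs
  calc |∫ x in s, f x ∂μ - c * μ.real s| = |∫ x in s, (f x - c) ∂μ| := by
        rw [integral_sub hf hc, setIntegral_const, smul_eq_mul, mul_comm]
    _ ≤ ∫ x in s, |f x - c| ∂μ := abs_integral_le_integral_abs

lemma setIntegral_abs_indicator_const_sub {s L : Set α} (hs : MeasurableSet s)
    (hL : MeasurableSet L) (hLs : L ⊆ s) (hsμ : μ s ≠ ⊤) (c m : ℝ) :
    ∫ x in s, |L.indicator (fun _ => c) x - m| ∂μ = μ.real L * |c - m| + μ.real (s \ L) * |m| := by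
  have hint : IntegrableOn (fun x => |L.indicator (fun _ => c) x - m|) s μ :=
    (((integrableOn_const hsμ).indicator hL).sub (integrableOn_const hsμ)).abs
  rw [← integral_inter_add_sdiff hL hint, inter_eq_right.2 hLs,
    setIntegral_congr_fun (g := fun _ => |c - m|) hL fun x hx => by simp [hx],
    setIntegral_congr_fun (g := fun _ => |m|) (hs.diff hL) fun x hx => by simp [hx.2],
    setIntegral_const, setIntegral_const, smul_eq_mul, smul_eq_mul]

end Generic

section Cube

variable {n : ℕ}

lemma cube_eq_pi (a : Fin n → ℝ) (h : ℝ) :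
    cube n a h = univ.pi fun i => Icc (a i) (a i + h) := by
  ext x
  simp only [cube, mem_univ_pi, mem_Icc, mem_ofPred_eq]

lemma measurableSet_cube (a : Fin n → ℝ) (h : ℝ) : MeasurableSet (cube n a h) := by
  rw [cube_eq_pi]
  exact .univ_pi fun _ => measurableSet_Icc

lemma isCompact_cube (a : Fin n → ℝ) (h : ℝ) : IsCompact (cube n a h) := by
  rw [cube_eq_pi]
  exact isCompact_univ_pi fun _ => isCompact_Icc

lemma volume_cube (a : Fin n → ℝ) {h : ℝ} (hh : 0 ≤ h) :
    volume (cube n a h) = ENNReal.ofReal (h ^ n) := by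
  rw [cube_eq_pi, volume_pi_pi]
  simp [Real.volume_Icc, ENNReal.ofReal_pow hh]

lemma left_mem_cube (a : Fin n → ℝ) {h : ℝ} (hh : 0 ≤ h) : a ∈ cube n a h :=
  fun _ => ⟨le_rfl, le_add_of_nonneg_right hh⟩

lemma cube_subset_closedBall {a x : Fin n → ℝ} {h : ℝ} (hh : 0 ≤ h) (hx : x ∈ cube n a h) :
    cube n a h ⊆ Metric.closedBall x h := by
  intro y hy
  rw [Metric.mem_closedBall, dist_pi_le_iff hh]
  intro i
  rw [Real.dist_eq, abs_le]
  constructor <;> linarith [hx i, hy i]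

/-- The half of `cube n a h` where `x i ≤ a i + h / 2`. -/
def lowerHalf (i : Fin n) (a : Fin n → ℝ) (h : ℝ) : Set (Fin n → ℝ) :=
  univ.pi (Function.update (fun j => Icc (a j) (a j + h)) i (Icc (a i) (a i + h / 2)))

lemma measurableSet_lowerHalf (i : Fin n) (a : Fin n → ℝ) (h : ℝ) :
    MeasurableSet (lowerHalf i a h) :=
  .univ_pi fun j => by
    rcases eq_or_ne j i with rfl | hj
    · simp
    · simp [hj]

lemma lowerHalf_subset_cube (i : Fin n) (a : Fin n → ℝ) {h : ℝ} (hh : 0 ≤ h) :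
    lowerHalf i a h ⊆ cube n a h := by
  rw [cube_eq_pi]
  refine pi_mono fun j _ => ?_
  rcases eq_or_ne j i with rfl | hj
  · simpa using Icc_subset_Icc_right (by linarith)
  · simp [hj]

lemma volume_lowerHalf (i : Fin n) (a : Fin n → ℝ) {h : ℝ} (hh : 0 ≤ h) :
    volume (lowerHalf i a h) = ENNReal.ofReal (h ^ n / 2) := by
  have hvol : ∀ j, volume (Function.update (fun j => Icc (a j) (a j + h)) i
      (Icc (a i) (a i + h / 2)) j) = Function.update (fun _ => ENNReal.ofReal h) i
      (ENNReal.ofReal (h / 2)) j := by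
    intro j
    rcases eq_or_ne j i with rfl | hj
    · simp [Real.volume_Icc]
    · simp [hj, Real.volume_Icc]
  rw [lowerHalf, volume_pi_pi, Finset.prod_congr rfl fun j _ => hvol j,
    Finset.prod_update_of_mem (Finset.mem_univ i), Finset.prod_const,
    ← ENNReal.ofReal_pow hh, ← ENNReal.ofReal_mul (by positivity)]
  congr 1
  rw [Finset.card_sdiff_of_subset (by simp), Finset.card_univ, Fintype.card_fin,
    Finset.card_singleton, div_mul_eq_mul_div, ← pow_succ', Nat.sub_add_cancel i.pos]

lemma volume_iUnion_gt_cube_le (hn : 0 < n) (x : ℕ → Fin n → ℝ) {h : ℕ → ℝ}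
    (hpos : ∀ k, 0 < h k) (hdec : ∀ k, h (k + 1) ≤ 9⁻¹ * h k) (k : ℕ) :
    volume (⋃ j > k, cube n (x j) (h j)) ≤ ENNReal.ofReal (h k ^ n / 8) := by
  have hvol : ∀ i, h (k + (i + 1)) ^ n ≤ h k ^ n * 9⁻¹ ^ (i + 1) := fun i => by
    have hgeom : h (k + (i + 1)) ≤ 9⁻¹ ^ (i + 1) * h k :=
      le_geom (u := fun j => h (k + j)) (by norm_num) (i + 1) fun j _ => hdec (k + j)
    calc h (k + (i + 1)) ^ n ≤ (9⁻¹ ^ (i + 1) * h k) ^ n := by gcongr; exact (hpos _).le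
      _ = h k ^ n * (9⁻¹ ^ (i + 1)) ^ n := by ring
      _ ≤ h k ^ n * 9⁻¹ ^ (i + 1) := by
          have := hpos k
          gcongr
          exact pow_le_of_le_one (by positivity)
            (pow_le_one₀ (by norm_num) (by norm_num : (9:ℝ)⁻¹ ≤ 1)) hn.ne'
  have hsum : HasSum (fun i : ℕ => h k ^ n * 9⁻¹ ^ (i + 1)) (h k ^ n / 8) := by
    have key := (hasSum_geometric_of_lt_one (r := (9:ℝ)⁻¹) (by norm_num) (by norm_num)).mul_left
      (h k ^ n * 9⁻¹)
    rw [show h k ^ n * 9⁻¹ * (1 - 9⁻¹)⁻¹ = h k ^ n / 8 by norm_num; ring] at key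
    simpa only [pow_succ', mul_assoc] using key
  calc volume (⋃ j > k, cube n (x j) (h j))
      ≤ volume (⋃ i : ℕ, cube n (x (k + (i + 1))) (h (k + (i + 1)))) := by
        refine measure_mono fun y hy => ?_
        obtain ⟨j, hjk, hy⟩ := mem_iUnion₂.1 hy
        obtain ⟨i, rfl⟩ := Nat.exists_eq_add_of_lt hjk
        exact mem_iUnion.2 ⟨i, hy⟩
    _ ≤ ∑' i : ℕ, ENNReal.ofReal (h k ^ n * 9⁻¹ ^ (i + 1)) := by
        refine (measure_iUnion_le _).trans (ENNReal.tsum_le_tsum fun i => ?_)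
        rw [volume_cube _ (hpos _).le]
        exact ENNReal.ofReal_le_ofReal (hvol i)
    _ = ENNReal.ofReal (h k ^ n / 8) := by
        have := hpos k
        rw [← ENNReal.ofReal_tsum_of_nonneg (fun i => by positivity) hsum.summable, hsum.tsum_eq]

def IsCubeLebesguePoint (f : (Fin n → ℝ) → ℝ) (x : Fin n → ℝ) : Prop :=
  ∀ ε > 0, ∃ δ > 0, ∀ (a : Fin n → ℝ) (h : ℝ), 0 < h → h ≤ δ → x ∈ cube n a h →
    ∫ y in cube n a h, |f y - f x| ≤ ε * h ^ n

lemma isCubeLebesguePoint_of_tendsto {f : (Fin n → ℝ) → ℝ} (hf : LocallyIntegrable f)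
    {x : Fin n → ℝ}
    (hx : Tendsto (fun r => ⨍ y in Metric.closedBall x r, |f y - f x|) (𝓝[>] 0) (𝓝 0)) :
    IsCubeLebesguePoint f x := by
  intro ε hε
  obtain ⟨δ, hδ, hsmall⟩ := mem_nhdsGT_iff_exists_Ioc_subset.1 <|
    hx.eventually_le_const (show 0 < ε / 2 ^ n by positivity)
  refine ⟨δ, hδ, fun a h hh hhδ hxQ => ?_⟩
  set B := Metric.closedBall x h
  have hB : volume B ≠ ⊤ := measure_closedBall_lt_top.ne
  have hvolB : volume.real B = (2 * h) ^ n := by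
    simp [B, measureReal_def, Real.volume_pi_closedBall x hh.le, hh.le]
  have hint : IntegrableOn (fun y => |f y - f x|) B :=
    ((hf.integrableOn_isCompact (isCompact_closedBall x h)).sub (integrableOn_const hB)).abs
  calc ∫ y in cube n a h, |f y - f x|
      ≤ ∫ y in B, |f y - f x| :=
        setIntegral_mono_set hint (.of_forall fun _ => abs_nonneg _)
          (cube_subset_closedBall hh.le hxQ).eventuallyLE
    _ = (2 * h) ^ n * ⨍ y in B, |f y - f x| := by
        rw [← hvolB, ← smul_eq_mul, measure_smul_setAverage _ hB]
    _ ≤ (2 * h) ^ n * (ε / 2 ^ n) := by gcongr; exact hsmall ⟨hh, hhδ⟩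
    _ = ε * h ^ n := by rw [mul_pow]; field_simp

lemma ae_isCubeLebesguePoint {f : (Fin n → ℝ) → ℝ} (hf : LocallyIntegrable f) :
    ∀ᵐ x, IsCubeLebesguePoint f x := by
  filter_upwards [IsUnifLocDoublingMeasure.ae_tendsto_average_norm_sub (μ := volume) hf 1] with x hx
  refine isCubeLebesguePoint_of_tendsto hf ?_
  simpa [Real.norm_eq_abs] using hx (fun _ => x) id tendsto_id
    (eventually_nhdsWithin_of_forall fun r hr => by simpa using hr.out.le)

lemma abs_avgI_mul_le (s : Set (Fin n → ℝ)) (g : (Fin n → ℝ) → ℝ) :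
    |avgI n s g| * volume.real s ≤ ∫ x in s, |g x| := by
  rw [avgI, abs_mul, abs_inv, abs_of_nonneg ENNReal.toReal_nonneg, ← measureReal_def,
    mul_right_comm]
  calc (volume.real s)⁻¹ * volume.real s * |∫ x in s, g x| ≤ 1 * |∫ x in s, g x| := by
        gcongr; exact inv_mul_le_one
    _ ≤ ∫ x in s, |g x| := by simpa using abs_integral_le_integral_abs

lemma integral_abs_sub_avgI_le {s : Set (Fin n → ℝ)} (hs : volume s ≠ ⊤)
    {g : (Fin n → ℝ) → ℝ} (hg : IntegrableOn g s) :
    ∫ x in s, |g x - avgI n s g| ≤ 2 * ∫ x in s, |g x| := by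
  have hm : IntegrableOn (fun _ => |avgI n s g|) s := integrableOn_const hs
  calc ∫ x in s, |g x - avgI n s g| ≤ ∫ x in s, (|g x| + |avgI n s g|) :=
        setIntegral_mono ((hg.sub (integrableOn_const hs)).abs) (hg.abs.add hm)
          fun x => abs_sub _ _
    _ = (∫ x in s, |g x|) + |avgI n s g| * volume.real s := by
        rw [integral_add hg.abs hm, setIntegral_const, smul_eq_mul, mul_comm]
    _ ≤ 2 * ∫ x in s, |g x| := by linarith [abs_avgI_mul_le s g]

lemma inv_integral_mul_integral_abs_sub_avgI_le_two {s : Set (Fin n → ℝ)} (hs : volume s ≠ ⊤)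
    {f g : (Fin n → ℝ) → ℝ} (hf : IntegrableOn f s) (hg : IntegrableOn g s)
    (hgf : ∀ᵐ x ∂volume.restrict s, |g x| ≤ f x) :
    (∫ x in s, f x)⁻¹ * ∫ x in s, |g x - avgI n s g| ≤ 2 := by
  have hgf' : ∫ x in s, |g x| ≤ ∫ x in s, f x := integral_mono_ae hg.abs hf hgf
  rcases (integral_nonneg_of_ae (hgf.mono fun x hx => (abs_nonneg _).trans hx)).eq_or_lt
    with hzero | hpos
  · simp [← hzero]
  · rw [inv_mul_le_iff₀ hpos]
    linarith [integral_abs_sub_avgI_le hs hg]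

lemma le_setIntegral_abs_indicator_sub (i : Fin n) {f : (Fin n → ℝ) → ℝ} {A : Set (Fin n → ℝ)}
    (hA : MeasurableSet A) {a : Fin n → ℝ} {h c : ℝ} (hh : 0 < h) (hc : 0 ≤ c)
    (hf : IntegrableOn f (cube n a h))
    (hosc : ∫ y in cube n a h, |f y - c| ≤ c / 8 * h ^ n)
    (hD : volume (cube n a h ∩ symmDiff A (lowerHalf i a h)) ≤ ENNReal.ofReal (h ^ n / 8))
    (m : ℝ) :
    c * h ^ n / 4 ≤ ∫ y in cube n a h, |A.indicator f y - m| := by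
  set Q := cube n a h
  set L := lowerHalf i a h
  set g := L.indicator fun _ => c
  have hQ : volume Q ≠ ⊤ := by simp [Q, volume_cube a hh.le]
  have hLQ : L ⊆ Q := lowerHalf_subset_cube i a hh.le
  have hL : MeasurableSet L := measurableSet_lowerHalf i a h
  have hvolL : volume.real L = h ^ n / 2 := by
    rw [measureReal_def, volume_lowerHalf i a hh.le, ENNReal.toReal_ofReal (by positivity)]
  have hvolQL : volume.real (Q \ L) = h ^ n / 2 := by
    rw [measureReal_sdiff hLQ hL hQ, hvolL, measureReal_def, volume_cube a hh.le,
      ENNReal.toReal_ofReal (by positivity)]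
    ring
  have hb : IntegrableOn (A.indicator f) Q := hf.indicator hA
  have hg : IntegrableOn g Q := (integrableOn_const hQ).indicator hL
  have hD' : volume.real (Q ∩ symmDiff A L) ≤ h ^ n / 8 :=
    ENNReal.toReal_le_of_le_ofReal (by positivity) hD
  have hgm : c * h ^ n / 2 ≤ ∫ y in Q, |g y - m| := by
    rw [setIntegral_abs_indicator_const_sub (measurableSet_cube a h) hL hLQ hQ, hvolL, hvolQL]
    have hcm : c ≤ |c - m| + |m| := by
      linarith [abs_sub_abs_le_abs_sub c m, abs_of_nonneg hc]
    nlinarith [pow_pos hh n]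
  have hbg : ∫ y in Q, |A.indicator f y - g y| ≤ c / 8 * h ^ n + c * (h ^ n / 8) := by
    have hdiff : IntegrableOn ((symmDiff A L).indicator fun _ => |c|) Q :=
      (integrableOn_const hQ).indicator (hA.symmDiff hL)
    have hfc : IntegrableOn (fun y => |f y - c|) Q := (hf.sub (integrableOn_const hQ)).abs
    calc ∫ y in Q, |A.indicator f y - g y|
        ≤ ∫ y in Q, (|f y - c| + (symmDiff A L).indicator (fun _ => |c|) y) :=
          setIntegral_mono (hb.sub hg).abs (hfc.add hdiff)
            (abs_indicator_sub_indicator_const_le A L f c)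
      _ = (∫ y in Q, |f y - c|) + c * volume.real (Q ∩ symmDiff A L) := by
          rw [integral_add hfc hdiff,
            setIntegral_indicator (hA.symmDiff hL), setIntegral_const,
            smul_eq_mul, abs_of_nonneg hc, mul_comm]
      _ ≤ c / 8 * h ^ n + c * (h ^ n / 8) := by gcongr
  have htri : ∫ y in Q, |g y - m|
      ≤ (∫ y in Q, |A.indicator f y - m|) + ∫ y in Q, |A.indicator f y - g y| := by
    have hbm : IntegrableOn (fun y => |A.indicator f y - m|) Q :=
      (hb.sub (integrableOn_const hQ)).abs
    calc ∫ y in Q, |g y - m| ≤ ∫ y in Q, (|A.indicator f y - m| + |A.indicator f y - g y|) :=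
          setIntegral_mono ((hg.sub (integrableOn_const hQ)).abs) (hbm.add (hb.sub hg).abs)
            fun y => by simpa [abs_sub_comm, add_comm] using abs_sub_le (g y) (A.indicator f y) m
      _ = _ := integral_add hbm (hb.sub hg).abs
  linarith

lemma div_div_five_le_inv_integral_mul (i : Fin n) {η₁ η₂ : (Fin n → ℝ) → ℝ}
    {A : Set (Fin n → ℝ)} (hA : MeasurableSet A) {a : Fin n → ℝ} {h c₁ c₂ : ℝ} (hh : 0 < h)
    (hc₁ : 0 ≤ c₁) (hc₂ : 0 < c₂) (hη₁ : IntegrableOn η₁ (cube n a h))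
    (hη₂ : IntegrableOn η₂ (cube n a h))
    (hosc₁ : ∫ y in cube n a h, |η₁ y - c₁| ≤ c₁ / 8 * h ^ n)
    (hosc₂ : ∫ y in cube n a h, |η₂ y - c₂| ≤ c₂ / 8 * h ^ n)
    (hD : volume (cube n a h ∩ symmDiff A (lowerHalf i a h)) ≤ ENNReal.ofReal (h ^ n / 8)) :
    c₁ / c₂ / 5 ≤ (∫ y in cube n a h, η₂ y)⁻¹ *
      ∫ y in cube n a h, |A.indicator η₁ y - avgI n (cube n a h) (A.indicator η₁)| := by
  have hV : volume.real (cube n a h) = h ^ n := by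
    rw [measureReal_def, volume_cube a hh.le, ENNReal.toReal_ofReal (by positivity)]
  have hη₂Q := abs_le.1 (abs_setIntegral_sub_mul_le (by simp [volume_cube a hh.le]) hη₂ c₂)
  rw [hV] at hη₂Q
  have hVpos : 0 < h ^ n := by positivity
  have hpos : 0 < ∫ y in cube n a h, η₂ y := by nlinarith
  rw [le_inv_mul_iff₀ hpos, mul_comm]
  calc c₁ / c₂ / 5 * ∫ y in cube n a h, η₂ y ≤ c₁ / c₂ / 5 * (9 / 8 * c₂ * h ^ n) := by
        gcongr; linarith
    _ ≤ c₁ * h ^ n / 4 := by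
        field_simp
        nlinarith [mul_nonneg hc₁ hVpos.le]
    _ ≤ _ := le_setIntegral_abs_indicator_sub i hA hh hc₁ hη₁ hosc₁ hD _

lemma exists_isCubeLebesguePoint_lt_div {η₁ η₂ : (Fin n → ℝ) → ℝ} (h₁ : LocallyIntegrable η₁)
    (h₂ : LocallyIntegrable η₂) (hpos₁ : ∀ᵐ x, 0 < η₁ x) (hpos₂ : ∀ᵐ x, 0 < η₂ x)
    (hratio : ¬ ∃ C : ℝ, ∀ᵐ x, η₁ x / η₂ x ≤ C) (C : ℝ) :
    ∃ x, 0 < η₁ x ∧ 0 < η₂ x ∧ C < η₁ x / η₂ x ∧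
      IsCubeLebesguePoint η₁ x ∧ IsCubeLebesguePoint η₂ x := by
  by_contra hnone
  refine hratio ⟨C, ?_⟩
  filter_upwards [hpos₁, hpos₂, ae_isCubeLebesguePoint h₁, ae_isCubeLebesguePoint h₂]
    with x hx₁ hx₂ hL₁ hL₂
  exact le_of_not_gt fun hC => hnone ⟨x, hx₁, hx₂, hC, hL₁, hL₂⟩

end Cube

/-- Lemma 4.1 (Lerner–Ombrosi–Rivera-Ríos): if `η₁/η₂ ∉ L^∞` then `BMO_{η₁} ⊄ BMO_{η₂}`. -/
theorem stmt17 (n : ℕ) (hn : 0 < n) (η₁ η₂ : (Fin n → ℝ) → ℝ)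
    (h₁ : MeasureTheory.LocallyIntegrable η₁) (h₂ : MeasureTheory.LocallyIntegrable η₂)
    (hpos₁ : ∀ᵐ x, 0 < η₁ x) (hpos₂ : ∀ᵐ x, 0 < η₂ x)
    (hratio : ¬ ∃ C : ℝ, ∀ᵐ x, η₁ x / η₂ x ≤ C) :
    ∃ b : (Fin n → ℝ) → ℝ, MeasureTheory.LocallyIntegrable b ∧
      (∃ C : ℝ, ∀ (a : Fin n → ℝ) (h : ℝ), 0 < h →
        (∫ x in cube n a h, η₁ x)⁻¹ *
          ∫ x in cube n a h, |b x - avgI n (cube n a h) b| ≤ C) ∧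
      ¬ (∃ C : ℝ, ∀ (a : Fin n → ℝ) (h : ℝ), 0 < h →
        (∫ x in cube n a h, η₂ x)⁻¹ *
          ∫ x in cube n a h, |b x - avgI n (cube n a h) b| ≤ C) := by
  choose x hx₁ hx₂ hx hL₁ hL₂ using fun k : ℕ =>
    exists_isCubeLebesguePoint_lt_div h₁ h₂ hpos₁ hpos₂ hratio k
  choose δ₁ hδ₁ hosc₁ using fun k => hL₁ k (η₁ (x k) / 8) (by linarith [hx₁ k])
  choose δ₂ hδ₂ hosc₂ using fun k => hL₂ k (η₂ (x k) / 8) (by linarith [hx₂ k])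
  obtain ⟨h, hh⟩ := exists_pos_le_of_succ_le_mul (fun k => min (δ₁ k) (δ₂ k))
    (fun k => lt_min (hδ₁ k) (hδ₂ k)) (r := 9⁻¹) (by norm_num)
  choose hpos hle hdec using hh
  set i : Fin n := ⟨0, hn⟩
  set A := ⋃ k, lowerHalf i (x k) (h k) \ ⋃ j > k, cube n (x j) (h j)
  have hA : MeasurableSet A := .iUnion fun k => (measurableSet_lowerHalf i _ _).diff
    (.iUnion fun j => .iUnion fun _ => measurableSet_cube _ _)
  refine ⟨A.indicator η₁, h₁.indicator hA, ⟨2, fun a r hr => ?_⟩, ?_⟩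
  · refine inv_integral_mul_integral_abs_sub_avgI_le_two (by simp [volume_cube a hr.le])
      (h₁.integrableOn_isCompact (isCompact_cube a r))
      ((h₁.indicator hA).integrableOn_isCompact (isCompact_cube a r))
      (ae_restrict_of_ae (hpos₁.mono fun y hy => ?_))
    simpa [abs_of_pos hy] using norm_indicator_le_norm_self (s := A) η₁ y
  · rintro ⟨C, hC⟩
    obtain ⟨k, hk⟩ := exists_nat_gt (5 * C)
    have hQ := isCompact_cube (x k) (h k)
    have hmem := left_mem_cube (x k) (hpos k).le
    have hlower := div_div_five_le_inv_integral_mul i hA (hpos k) (hx₁ k).le (hx₂ k)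
      (h₁.integrableOn_isCompact hQ) (h₂.integrableOn_isCompact hQ)
      (hosc₁ k _ _ (hpos k) ((hle k).trans (min_le_left _ _)) hmem)
      (hosc₂ k _ _ (hpos k) ((hle k).trans (min_le_right _ _)) hmem)
      ((measure_mono (inter_symmDiff_iUnion_sdiff_subset
        (fun k => lowerHalf_subset_cube i (x k) (hpos k).le) k)).trans
        (volume_iUnion_gt_cube_le hn x hpos hdec k))
    linarith [hx k, hC (x k) (h k) (hpos k)]
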